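/- arXiv:1408.5604 — 2 statements merged into one kernel-verified Lean document; each statement's English description precedes it below -/
import Mathlib

section
/- Let S and Σ be p×p positive definite real symmetric matrices with 0 ≺ Σ ≺ 2S (in the Loewner order). Then for every nonzero real symmetric p×p matrix A, tr((2S - Σ) Σ⁻¹ A Σ⁻¹ A Σ⁻¹) > 0. In particular the function ℓ(Σ) = -log det Σ - tr(S Σ⁻¹) is strictly concave on the set {Σ : 0 ≺ Σ ≺ 2S}. -/
/-!
The Hessian trace is `tr (M X)` with `M = 2S - Σ ≻ 0` and
`X = Σ⁻¹ A Σ⁻¹ A Σ⁻¹ = (Σ⁻¹ A) Σ⁻¹ (Σ⁻¹ A)ᴴ`, a nonzero positive semidefinite matrix. Writing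
`M = Bᴴ B` turns it into the trace of the nonzero positive semidefinite matrix `B X Bᴴ`.

For strict concavity, diagonalise two points simultaneously: `x = G Gᴴ`, `y = G D Gᴴ`. On the
matrices `G (diagonal e) Gᴴ` the function is a constant plus `∑ᵢ (-log eᵢ - wᵢ / eᵢ)` with
`wᵢ = (G⁻¹ S G⁻ᴴ)ᵢᵢ`, and `0 ≺ Σ ≺ 2S` forces `eᵢ ∈ (0, 2wᵢ)`, where `u ↦ -log u - w / u` is
strictly concave because its second derivative is `(u - 2w) / u³`.
-/

open Matrix Set
open scoped MatrixOrder ComplexOrder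

lemma strictConcaveOn_neg_log_sub_div (c : ℝ) :
    StrictConcaveOn ℝ (Ioo 0 (2 * c)) (fun u => -Real.log u - c / u) := by
  have hf : ∀ v : ℝ, v ≠ 0 →
      HasDerivAt (fun u => -Real.log u - c / u) (c / v ^ 2 - v⁻¹) v := fun v hv => by
    simpa only [div_eq_mul_inv, neg_mul, mul_neg, sub_neg_eq_add, neg_add_eq_sub] using
      (Real.hasDerivAt_log hv).fun_neg.fun_sub ((hasDerivAt_inv hv).const_mul c)
  have hf' : ∀ v : ℝ, v ≠ 0 →
      HasDerivAt (fun u => c / u ^ 2 - u⁻¹) ((v - 2 * c) / v ^ 3) v := fun v hv => by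
    simp only [div_eq_mul_inv]
    refine ((((hasDerivAt_pow 2 v).fun_inv (pow_ne_zero 2 hv)).const_mul c).fun_sub
      (hasDerivAt_inv hv)).congr_deriv ?_
    field_simp
    ring
  refine strictConcaveOn_of_deriv2_neg' (convex_Ioo _ _)
    (fun v hv => (hf v hv.1.ne').continuousAt.continuousWithinAt) fun v hv => ?_
  have hderiv : deriv (fun u => -Real.log u - c / u) =ᶠ[nhds v] fun u => c / u ^ 2 - u⁻¹ :=
    (lt_mem_nhds hv.1).mono fun u hu => (hf u hu.ne').deriv
  rw [Function.iterate_succ_apply', Function.iterate_one, hderiv.deriv_eq, (hf' v hv.1.ne').deriv]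
  exact div_neg_of_neg_of_pos (by linarith [hv.2]) (pow_pos hv.1 3)

theorem strictConcaveOn_univ_pi_sum {ι E : Type*} [Fintype ι] [AddCommGroup E] [Module ℝ E]
    {s : ι → Set E} {f : ι → E → ℝ} (hf : ∀ i, StrictConcaveOn ℝ (s i) (f i)) :
    StrictConcaveOn ℝ (univ.pi s) (fun x => ∑ i, f i (x i)) := by
  refine ⟨convex_pi fun i _ => (hf i).1, fun x hx y hy hxy a b ha hb hab => ?_⟩
  obtain ⟨i₀, hi₀⟩ := Function.ne_iff.mp hxy
  simp only [smul_eq_mul, Finset.mul_sum, ← Finset.sum_add_distrib, Pi.add_apply, Pi.smul_apply]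
  exact Finset.sum_lt_sum
    (fun i _ => (hf i).concaveOn.2 (hx i trivial) (hy i trivial) ha.le hb.le hab)
    ⟨i₀, Finset.mem_univ _, (hf i₀).2 (hx i₀ trivial) (hy i₀ trivial) hi₀ ha hb hab⟩

namespace Matrix

section RCLike

variable {n 𝕜 : Type*} [RCLike 𝕜]

lemma convex_setOf_posDef : Convex ℝ {M : Matrix n n 𝕜 | M.PosDef} := by
  intro x hx y hy a b ha hb hab
  rcases ha.eq_or_lt with rfl | ha
  · simpa [show b = 1 by linarith] using hy
  · exact (hx.smul ha).add_posSemidef (hy.posSemidef.smul hb)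

lemma convex_setOf_posDef_sub (S : Matrix n n 𝕜) :
    Convex ℝ {M : Matrix n n 𝕜 | (S - M).PosDef} := by
  intro x hx y hy a b ha hb hab
  simpa only [mem_ofPred_eq, smul_sub, sub_add_sub_comm, ← add_smul, hab, one_smul] using
    convex_setOf_posDef hx hy ha hb hab

variable [Fintype n]

lemma PosSemidef.trace_pos {X : Matrix n n 𝕜} (hX : X.PosSemidef) (hX0 : X ≠ 0) :
    0 < X.trace :=
  hX.trace_nonneg.lt_of_ne' (hX.trace_eq_zero_iff.not.mpr hX0)

variable [DecidableEq n]

lemma PosDef.exists_eq_star_mul_self {M : Matrix n n 𝕜} (hM : M.PosDef) :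
    ∃ B : Matrix n n 𝕜, IsUnit B ∧ M = star B * B := by
  obtain ⟨B, rfl⟩ := CStarAlgebra.nonneg_iff_eq_star_mul_self.mp hM.posSemidef.nonneg
  exact ⟨B, isUnit_of_mul_isUnit_right hM.isUnit, rfl⟩

lemma PosDef.trace_mul_pos {M X : Matrix n n 𝕜} (hM : M.PosDef) (hX : X.PosSemidef)
    (hX0 : X ≠ 0) : 0 < (M * X).trace := by
  obtain ⟨B, hB, rfl⟩ := hM.exists_eq_star_mul_self
  have hconj0 : B * X * star B ≠ 0 := by
    rwa [Ne, hB.star.mul_left_eq_zero, hB.mul_right_eq_zero]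
  rw [mul_assoc, trace_mul_comm, mul_assoc, ← mul_assoc]
  exact (hX.mul_mul_conjTranspose_same B).trace_pos hconj0

lemma PosDef.mul_mul_conjTranspose_same_ne_zero {M B : Matrix n n 𝕜} (hM : M.PosDef)
    (hB : B ≠ 0) : B * M * Bᴴ ≠ 0 := by
  refine fun h => (hM.trace_mul_pos (posSemidef_conjTranspose_mul_self B)
    (conjTranspose_mul_self_eq_zero.not.mpr hB)).ne' ?_
  rw [trace_mul_comm, mul_assoc, trace_mul_comm, h, trace_zero]

lemma PosDef.trace_mul_inv_mul_mul_inv_mul_mul_inv_pos {M Sig A : Matrix n n 𝕜} (hM : M.PosDef)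
    (hSig : Sig.PosDef) (hA : A.IsHermitian) (hA0 : A ≠ 0) :
    0 < (M * Sig⁻¹ * A * Sig⁻¹ * A * Sig⁻¹).trace := by
  have hB0 : Sig⁻¹ * A ≠ 0 := by
    rwa [Ne, (isUnit_nonsing_inv_iff.mpr hSig.isUnit).mul_right_eq_zero]
  have hBH : (Sig⁻¹ * A)ᴴ = A * Sig⁻¹ := by
    rw [conjTranspose_mul, hA.eq, hSig.inv.isHermitian.eq]
  have hX := hSig.inv.posSemidef.mul_mul_conjTranspose_same (Sig⁻¹ * A)
  have hX0 := hSig.inv.mul_mul_conjTranspose_same_ne_zero hB0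
  rw [hBH] at hX hX0
  simpa only [mul_assoc] using hM.trace_mul_pos hX hX0

lemma PosDef.exists_eq_mul_diagonal_mul_conjTranspose {x y : Matrix n n 𝕜} (hx : x.PosDef)
    (hy : y.IsHermitian) : ∃ G : Matrix n n 𝕜, IsUnit G ∧ x = G * Gᴴ ∧
      ∃ d : n → ℝ, y = G * diagonal (RCLike.ofReal ∘ d) * Gᴴ := by
  obtain ⟨B, hB, rfl⟩ := hx.exists_eq_star_mul_self
  have hC : (B⁻¹ᴴ * y * B⁻¹).IsHermitian := isHermitian_conjTranspose_mul_mul _ hy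
  obtain ⟨U, d, hUd⟩ : ∃ (U : unitaryGroup n 𝕜) (d : n → ℝ), B⁻¹ᴴ * y * B⁻¹ =
      (U : Matrix n n 𝕜) * diagonal (RCLike.ofReal ∘ d) * star (U : Matrix n n 𝕜) :=
    ⟨_, _, hC.spectral_theorem⟩
  have hBB : B⁻¹ * B = 1 := nonsing_inv_mul B ((isUnit_iff_isUnit_det B).mp hB)
  refine ⟨star B * U, hB.star.mul Unitary.isUnit_coe, ?_, d, ?_⟩
  · rw [conjTranspose_mul, ← star_eq_conjTranspose, mul_assoc, ← mul_assoc (U : Matrix n n 𝕜),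
      Unitary.mul_star_self_of_mem U.2, one_mul, star_eq_conjTranspose,
      conjTranspose_conjTranspose]
  · calc y = star (B⁻¹ * B) * y * (B⁻¹ * B) := by rw [hBB, star_one, one_mul, mul_one]
      _ = star B * (B⁻¹ᴴ * y * B⁻¹) * B := by
        rw [star_mul, star_eq_conjTranspose B⁻¹]; simp only [mul_assoc]
      _ = _ := by
        rw [hUd, conjTranspose_mul, ← star_eq_conjTranspose, ← star_eq_conjTranspose, star_star]
        simp only [mul_assoc]

end RCLike

variable {n : Type*} [Fintype n] [DecidableEq n]

lemma inv_diagonal_of_ne_zero {K : Type*} [Field K] {e : n → K} (he : ∀ i, e i ≠ 0) :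
    (diagonal e)⁻¹ = diagonal e⁻¹ :=
  inv_eq_left_inv <| by
    rw [diagonal_mul_diagonal, ← diagonal_one]
    exact congrArg diagonal (funext fun i => inv_mul_cancel₀ (he i))

lemma neg_log_det_sub_trace_mul_inv_mul_diagonal_mul_conjTranspose {G : Matrix n n ℝ}
    (hG : IsUnit G) (S : Matrix n n ℝ) {e : n → ℝ} (he : ∀ i, e i ≠ 0) :
    -Real.log (G * diagonal e * Gᴴ).det - (S * (G * diagonal e * Gᴴ)⁻¹).trace =
      -Real.log (G * Gᴴ).det + ∑ i, (-Real.log (e i) - (G⁻¹ * S * Gᴴ⁻¹) i i / e i) := by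
  have hdet : (G * Gᴴ).det ≠ 0 := ((isUnit_iff_isUnit_det _).mp (hG.mul hG.star)).ne_zero
  have hlogdet : Real.log (G * diagonal e * Gᴴ).det =
      Real.log (G * Gᴴ).det + ∑ i, Real.log (e i) := by
    rw [det_mul, det_mul, det_diagonal, mul_right_comm, ← det_mul,
      Real.log_mul hdet (Finset.prod_ne_zero_iff.mpr fun i _ => he i),
      Real.log_prod fun i _ => he i]
  have htrace : (S * (G * diagonal e * Gᴴ)⁻¹).trace = ∑ i, (G⁻¹ * S * Gᴴ⁻¹) i i / e i := by
    rw [mul_inv_rev, mul_inv_rev, inv_diagonal_of_ne_zero he, ← mul_assoc, ← mul_assoc,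
      trace_mul_comm, ← mul_assoc, ← mul_assoc]
    simp only [trace, diag, mul_diagonal, Pi.inv_apply, div_eq_mul_inv]
  rw [hlogdet, htrace, Finset.sum_sub_distrib, Finset.sum_neg_distrib]
  ring

lemma mem_Ioo_of_posDef_mul_diagonal_mul_conjTranspose {G S : Matrix n n ℝ} (hG : IsUnit G)
    {e : n → ℝ} (h₁ : (G * diagonal e * Gᴴ).PosDef)
    (h₂ : ((2 : ℝ) • S - G * diagonal e * Gᴴ).PosDef) (i : n) :
    e i ∈ Ioo 0 (2 * (G⁻¹ * S * Gᴴ⁻¹) i i) := by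
  have hconj {M : Matrix n n ℝ} (h : (G * M * Gᴴ).PosDef) : M.PosDef :=
    (IsUnit.posDef_star_right_conjugate_iff hG).mp h
  have hS : S = G * (G⁻¹ * S * Gᴴ⁻¹) * Gᴴ := by
    have hGH : IsUnit Gᴴ.det := (isUnit_iff_isUnit_det _).mp hG.star
    rw [← mul_assoc, ← mul_assoc, mul_nonsing_inv _ ((isUnit_iff_isUnit_det G).mp hG), one_mul,
      mul_assoc, nonsing_inv_mul _ hGH, mul_one]
  have h₂' := hconj (M := (2 : ℝ) • (G⁻¹ * S * Gᴴ⁻¹) - diagonal e) <| by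
    rwa [Matrix.mul_sub, Matrix.sub_mul, Matrix.mul_smul, Matrix.smul_mul, ← hS]
  constructor
  · simpa using (hconj h₁).diag_pos (i := i)
  · simpa using h₂'.diag_pos (i := i)

theorem strictConcaveOn_neg_log_det_sub_trace_mul_inv (S : Matrix n n ℝ) :
    StrictConcaveOn ℝ {Sig : Matrix n n ℝ | Sig.PosDef ∧ ((2 : ℝ) • S - Sig).PosDef}
      (fun Sig => -Real.log Sig.det - (S * Sig⁻¹).trace) := by
  refine ⟨convex_setOf_posDef.inter (convex_setOf_posDef_sub _), ?_⟩
  rintro x ⟨hx, hx'⟩ y ⟨hy, hy'⟩ hxy a b ha hb hab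
  obtain ⟨G, hG, rfl, d, rfl⟩ := hx.exists_eq_mul_diagonal_mul_conjTranspose hy.isHermitian
  simp only [RCLike.ofReal_real_eq_id, Function.id_comp] at hy hy' hxy ⊢
  set W := G⁻¹ * S * Gᴴ⁻¹
  set I : Set (n → ℝ) := univ.pi fun i => Ioo 0 (2 * W i i)
  have hmem {e : n → ℝ} (h₁ : (G * diagonal e * Gᴴ).PosDef)
      (h₂ : ((2 : ℝ) • S - G * diagonal e * Gᴴ).PosDef) : e ∈ I :=
    fun i _ => mem_Ioo_of_posDef_mul_diagonal_mul_conjTranspose hG h₁ h₂ i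
  have hval {e : n → ℝ} (he : e ∈ I) :=
    neg_log_det_sub_trace_mul_inv_mul_diagonal_mul_conjTranspose hG S fun i => (he i trivial).1.ne'
  have hcomb : a • (G * diagonal 1 * Gᴴ) + b • (G * diagonal d * Gᴴ) =
      G * diagonal (a • 1 + b • d) * Gᴴ := by
    have hdiag : diagonal (a • 1 + b • d) = a • diagonal 1 + b • diagonal d := by
      ext i j; by_cases h : i = j <;> simp [h]
    rw [hdiag, Matrix.mul_add, Matrix.add_mul, Matrix.mul_smul, Matrix.smul_mul, Matrix.mul_smul,
      Matrix.smul_mul]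
  have hx1 : G * Gᴴ = G * diagonal 1 * Gᴴ := by simp
  rw [hx1] at hx hx' hxy ⊢
  have hF := strictConcaveOn_univ_pi_sum fun i => strictConcaveOn_neg_log_sub_div (W i i)
  have h1 := hmem hx hx'
  have hd := hmem hy hy'
  have key := hF.2 h1 hd (fun h => hxy (h ▸ rfl)) ha hb hab
  rw [hcomb, hval h1, hval hd, hval (hF.1 h1 hd ha.le hb.le hab)]
  simp only [smul_eq_mul] at key ⊢
  linear_combination key - Real.log (G * Gᴴ).det * hab

end Matrix

theorem hessian_trace_pos_and_strictConcave_general {p : ℕ}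
    (S : Matrix (Fin p) (Fin p) ℝ) :
    (∀ Sig : Matrix (Fin p) (Fin p) ℝ, Sig.PosDef → ((2 : ℝ) • S - Sig).PosDef →
      ∀ A : Matrix (Fin p) (Fin p) ℝ, A.IsSymm → A ≠ 0 →
        0 < (((2 : ℝ) • S - Sig) * Sig⁻¹ * A * Sig⁻¹ * A * Sig⁻¹).trace) ∧
    StrictConcaveOn ℝ
      {Sig : Matrix (Fin p) (Fin p) ℝ | Sig.PosDef ∧ ((2 : ℝ) • S - Sig).PosDef}
      (fun Sig => - Real.log Sig.det - (S * Sig⁻¹).trace) :=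
  ⟨fun _ hSig hM _ hA hA0 => hM.trace_mul_inv_mul_mul_inv_mul_mul_inv_pos hSig
    (isHermitian_iff_isSymm.mpr hA) hA0, strictConcaveOn_neg_log_det_sub_trace_mul_inv S⟩

theorem hessian_trace_pos_and_strictConcave {p : ℕ}
    (S : Matrix (Fin p) (Fin p) ℝ) (hS : S.PosDef) :
    (∀ Sig : Matrix (Fin p) (Fin p) ℝ, Sig.PosDef → ((2 : ℝ) • S - Sig).PosDef →
      ∀ A : Matrix (Fin p) (Fin p) ℝ, A.IsSymm → A ≠ 0 →
        0 < (((2 : ℝ) • S - Sig) * Sig⁻¹ * A * Sig⁻¹ * A * Sig⁻¹).trace) ∧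
    StrictConcaveOn ℝ
      {Sig : Matrix (Fin p) (Fin p) ℝ | Sig.PosDef ∧ ((2 : ℝ) • S - Sig).PosDef}
      (fun Sig => - Real.log Sig.det - (S * Sig⁻¹).trace) :=
  hessian_trace_pos_and_strictConcave_general S
end

section
/- Let M be a nonempty subset of the cone of p×p positive definite real symmetric matrices that is closed in that cone (in the subspace topology), and let S be positive definite. Then the function ℓ̄(Σ) = log det(S Σ⁻¹) - tr(S Σ⁻¹) + p attains its maximum on M. -/
/-!
Write `ℓ(Σ) = log det (S Σ⁻¹) - tr (S Σ⁻¹)`. With `V = Σ^{1/2}` and `T = V⁻¹ S V⁻¹` we have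
`ℓ(Σ) = log det T - tr T = ∑ᵢ (log λᵢ - λᵢ)` over the eigenvalues `λᵢ > 0` of `T`. Every summand is
at most `-1`, so a lower bound `c ≤ ℓ(Σ)` bounds each `log λᵢ - λᵢ` from below and confines `λᵢ` to
an interval `[a, b] ⊂ (0, ∞)` depending only on `c`. Conjugating `a ≤ T ≤ b` by `V` gives
`b⁻¹ S ≤ Σ ≤ a⁻¹ S` in the Loewner order: the superlevel sets of `ℓ` lie in a compact Loewner
interval of positive definite matrices, on which `ℓ` is continuous. So the superlevel set of `ℓ`
in `M` through any point of `M` is compact, and a maximiser of `ℓ` on it maximises `ℓ` on `M`.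
-/

open Matrix

lemma Real.exists_bounds_of_le_log_sub_self (c : ℝ) :
    ∃ a b : ℝ, 0 < a ∧ 0 < b ∧ ∀ x, 0 < x → c ≤ Real.log x - x → a ≤ x ∧ x ≤ b := by
  refine ⟨Real.exp c, max 1 (-2 * c), Real.exp_pos c, by positivity, fun x hx h => ⟨?_, ?_⟩⟩
  · calc Real.exp c ≤ Real.exp (Real.log x) := Real.exp_le_exp.2 (by linarith)
      _ = x := Real.exp_log hx
  · -- `log x < x / 2` gives `x < -2 c`; the `max` only keeps `b` positive.
    have hlog_half : Real.log (x / 2) ≤ x / 2 - 1 := Real.log_le_sub_one_of_pos (by positivity)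
    rw [Real.log_div hx.ne' two_ne_zero] at hlog_half
    have := Real.log_two_lt_d9
    exact le_max_of_le_right (by linarith)

lemma exists_isMaxOn_of_isCompact_superlevel {α β : Type*} [TopologicalSpace α] [LinearOrder β]
    [TopologicalSpace β] [ClosedIciTopology β] {f : α → β} {s : Set α} {x₁ : α} (hx₁ : x₁ ∈ s)
    (hK : IsCompact {x | x ∈ s ∧ f x₁ ≤ f x}) (hf : ContinuousOn f {x | x ∈ s ∧ f x₁ ≤ f x}) :
    ∃ x₀ ∈ s, IsMaxOn f s x₀ := by
  obtain ⟨x₀, hx₀, hmax⟩ := hK.exists_isMaxOn ⟨x₁, hx₁, le_rfl⟩ hf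
  refine ⟨x₀, hx₀.1, fun x hx => ?_⟩
  by_cases h : f x₁ ≤ f x
  · exact hmax ⟨hx, h⟩
  · exact (le_of_not_ge h).trans hx₀.2

namespace Matrix

open scoped MatrixOrder

variable {n : Type*} [Fintype n]

section LoewnerInterval

lemma isClosed_setOf_posSemidef : IsClosed {A : Matrix n n ℝ | A.PosSemidef} := by
  simp only [posSemidef_iff_dotProduct_mulVec, Set.ofPred_and, Set.ofPred_forall, star_trivial]
  refine (isClosed_eq continuous_id.matrix_conjTranspose continuous_id).inter
    (isClosed_iInter fun x => isClosed_le continuous_const ?_)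
  exact continuous_const.dotProduct (continuous_id.matrix_mulVec continuous_const)

lemma isClosed_Icc (L U : Matrix n n ℝ) : IsClosed (Set.Icc L U) :=
  (isClosed_setOf_posSemidef.preimage (continuous_id.sub continuous_const)).inter
    (isClosed_setOf_posSemidef.preimage (continuous_const.sub continuous_id))

lemma PosSemidef.abs_apply_le [DecidableEq n] {A : Matrix n n ℝ} (hA : A.PosSemidef) (i j : n) :
    |A i j| ≤ (A i i + A j j) / 2 := by
  have hsymm : A j i = A i j := hA.1.apply i j
  have hadd := hA.dotProduct_mulVec_nonneg (Pi.single i 1 + Pi.single j 1)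
  have hsub := hA.dotProduct_mulVec_nonneg (Pi.single i 1 - Pi.single j 1)
  simp only [star_trivial, mulVec_add, mulVec_sub, mulVec_single, dotProduct_add,
    dotProduct_sub, add_dotProduct, sub_dotProduct, single_dotProduct, one_mul,
    col_apply, MulOpposite.op_one, one_smul] at hadd hsub
  rw [abs_le]
  constructor <;> linarith

attribute [local instance] Matrix.normedAddCommGroup Matrix.normedSpace

lemma norm_le_norm_of_nonneg_of_le {A B : Matrix n n ℝ} (hA : 0 ≤ A) (hAB : A ≤ B) :
    ‖A‖ ≤ ‖B‖ := by
  classical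
  have hdiag : ∀ k, A k k ≤ ‖B‖ := fun k => by
    have := (le_iff.1 hAB).diag_nonneg (i := k)
    have := (abs_le.1 (norm_entry_le_entrywise_sup_norm B (i := k) (j := k))).2
    simp only [sub_apply] at *
    linarith
  refine (norm_le_iff (norm_nonneg B)).2 fun i j => ?_
  have := (nonneg_iff_posSemidef.1 hA).abs_apply_le i j
  rw [Real.norm_eq_abs]
  linarith [hdiag i, hdiag j]

lemma isCompact_Icc (L U : Matrix n n ℝ) : IsCompact (Set.Icc L U) := by
  refine Metric.isCompact_of_isClosed_isBounded (isClosed_Icc L U) ?_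
  refine (Metric.isBounded_closedBall (x := L) (r := ‖U - L‖)).subset fun X hX => ?_
  rw [Metric.mem_closedBall, dist_eq_norm]
  exact norm_le_norm_of_nonneg_of_le (sub_nonneg.2 hX.1) (sub_le_sub_right hX.2 L)

end LoewnerInterval

variable [DecidableEq n]

noncomputable def logDetSubTrace (A : Matrix n n ℝ) : ℝ := Real.log A.det - A.trace

lemma logDetSubTrace_mul_comm (A B : Matrix n n ℝ) :
    logDetSubTrace (A * B) = logDetSubTrace (B * A) := by
  rw [logDetSubTrace, logDetSubTrace, det_mul_comm, trace_mul_comm]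

lemma continuousAt_logDetSubTrace {A : Matrix n n ℝ} (hA : A.det ≠ 0) :
    ContinuousAt logDetSubTrace A :=
  ((Real.continuousAt_log hA).comp continuous_id.matrix_det.continuousAt).sub
    continuous_id.matrix_trace.continuousAt

lemma continuousAt_logDetSubTrace_mul_inv {S Sig : Matrix n n ℝ} (hS : S.det ≠ 0)
    (hSig : Sig.det ≠ 0) : ContinuousAt (fun X => logDetSubTrace (S * X⁻¹)) Sig := by
  have hinv : ContinuousAt Inv.inv Sig :=
    continuousAt_matrix_inv Sig (by simpa [Ring.inverse_eq_inv'] using continuousAt_inv₀ hSig)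
  have hdet : (S * Sig⁻¹).det ≠ 0 := by
    rw [det_mul, det_nonsing_inv, Ring.inverse_eq_inv']
    exact mul_ne_zero hS (inv_ne_zero hSig)
  exact (continuousAt_logDetSubTrace hdet).comp (f := fun X => S * X⁻¹)
    ((continuous_const.matrix_mul continuous_id).continuousAt.comp hinv)

lemma PosDef.logDetSubTrace_eq_sum {A : Matrix n n ℝ} (hA : A.PosDef) :
    logDetSubTrace A = ∑ i, (Real.log (hA.1.eigenvalues i) - hA.1.eigenvalues i) := by
  rw [logDetSubTrace, hA.1.det_eq_prod_eigenvalues, hA.1.trace_eq_sum_eigenvalues,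
    Finset.sum_sub_distrib]
  simp only [RCLike.ofReal_real_eq_id, id]
  rw [Real.log_prod fun i _ => (hA.eigenvalues_pos i).ne']

lemma PosDef.le_log_sub_eigenvalues_of_le_logDetSubTrace {A : Matrix n n ℝ} (hA : A.PosDef)
    {c : ℝ} (hc : c ≤ logDetSubTrace A) (i : n) :
    c ≤ Real.log (hA.1.eigenvalues i) - hA.1.eigenvalues i := by
  set g := fun j => Real.log (hA.1.eigenvalues j) - hA.1.eigenvalues j
  have hg : ∀ j, g j ≤ 0 := fun j => by
    linarith [Real.log_le_sub_one_of_pos (hA.eigenvalues_pos j)]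
  calc c ≤ ∑ j, g j := hA.logDetSubTrace_eq_sum ▸ hc
    _ = g i + ∑ j ∈ Finset.univ.erase i, g j :=
      (Finset.add_sum_erase _ _ (Finset.mem_univ i)).symm
    _ ≤ g i := add_le_of_nonpos_right (Finset.sum_nonpos fun j _ => hg j)

lemma IsHermitian.smul_one_le_of_le_eigenvalues {A : Matrix n n ℝ} (hA : A.IsHermitian) {a : ℝ}
    (h : ∀ i, a ≤ hA.eigenvalues i) : a • 1 ≤ A := by
  rw [← Algebra.algebraMap_eq_smul_one]
  refine algebraMap_le_of_le_spectrum (fun x hx => ?_) hA.isSelfAdjoint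
  obtain ⟨i, rfl⟩ := hA.spectrum_real_eq_range_eigenvalues ▸ hx
  exact h i

lemma IsHermitian.le_smul_one_of_eigenvalues_le {A : Matrix n n ℝ} (hA : A.IsHermitian) {b : ℝ}
    (h : ∀ i, hA.eigenvalues i ≤ b) : A ≤ b • 1 := by
  rw [← Algebra.algebraMap_eq_smul_one]
  refine le_algebraMap_of_spectrum_le (fun x hx => ?_) hA.isSelfAdjoint
  obtain ⟨i, rfl⟩ := hA.spectrum_real_eq_range_eigenvalues ▸ hx
  exact h i

lemma exists_smul_one_le_and_le_smul_one_of_le_logDetSubTrace (c : ℝ) :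
    ∃ a b : ℝ, 0 < a ∧ 0 < b ∧ ∀ A : Matrix n n ℝ, A.PosDef → c ≤ logDetSubTrace A →
      a • 1 ≤ A ∧ A ≤ b • 1 := by
  obtain ⟨a, b, ha, hb, hab⟩ := Real.exists_bounds_of_le_log_sub_self c
  refine ⟨a, b, ha, hb, fun A hA hc => ⟨?_, ?_⟩⟩
  · exact hA.1.smul_one_le_of_le_eigenvalues fun i =>
      (hab _ (hA.eigenvalues_pos i) (hA.le_log_sub_eigenvalues_of_le_logDetSubTrace hc i)).1
  · exact hA.1.le_smul_one_of_eigenvalues_le fun i =>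
      (hab _ (hA.eigenvalues_pos i) (hA.le_log_sub_eigenvalues_of_le_logDetSubTrace hc i)).2

lemma PosDef.exists_Icc_superset_setOf_le_logDetSubTrace_mul_inv {S : Matrix n n ℝ}
    (hS : S.PosDef) (c : ℝ) :
    ∃ L U : Matrix n n ℝ, Set.Icc L U ⊆ {Sig | Sig.PosDef} ∧
      {Sig | Sig.PosDef ∧ c ≤ logDetSubTrace (S * Sig⁻¹)} ⊆ Set.Icc L U := by
  obtain ⟨a, b, ha, hb, hab⟩ :=
    exists_smul_one_le_and_le_smul_one_of_le_logDetSubTrace (n := n) c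
  refine ⟨b⁻¹ • S, a⁻¹ • S, fun Sig hSig => ?_, fun Sig ⟨hSig, hc⟩ => ?_⟩
  · simpa using PosDef.posSemidef_add hSig.1 (hS.smul (inv_pos.2 hb))
  set V := CFC.sqrt Sig
  have hV : IsUnit V := CFC.isUnit_sqrt_iff_isStrictlyPositive.2 hSig.isStrictlyPositive
  have hVdet : IsUnit V.det := (isUnit_iff_isUnit_det V).1 hV
  have hVV : V * V = Sig := CFC.sqrt_mul_sqrt_self Sig hSig.posSemidef.nonneg
  have hVsa : IsSelfAdjoint V := (CFC.sqrt_nonneg Sig).isSelfAdjoint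
  set T := V⁻¹ * S * V⁻¹
  have hT : T.PosDef := by
    have hstar : star V⁻¹ = V⁻¹ := by
      rw [star_eq_conjTranspose, conjTranspose_nonsing_inv, ← star_eq_conjTranspose, hVsa.star_eq]
    simpa [T, hstar] using
      (IsUnit.posDef_star_left_conjugate_iff (isUnit_nonsing_inv_iff.2 hV)).2 hS
  have hTc : c ≤ logDetSubTrace T := by
    rwa [← hVV, Matrix.mul_inv_rev, ← Matrix.mul_assoc, logDetSubTrace_mul_comm,
      ← Matrix.mul_assoc] at hc
  have hVTV : V * T * V = S := by
    simp only [T, ← Matrix.mul_assoc, mul_nonsing_inv V hVdet, Matrix.one_mul]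
    rw [Matrix.mul_assoc, nonsing_inv_mul V hVdet, Matrix.mul_one]
  have hVrV : ∀ r : ℝ, V * (r • 1) * V = r • Sig := fun r => by
    rw [mul_smul_comm, Matrix.mul_one, smul_mul_assoc, hVV]
  obtain ⟨haT, hTb⟩ := hab T hT hTc
  have haS : a • Sig ≤ S := hVrV a ▸ hVTV ▸ hVsa.conjugate_le_conjugate haT
  have hSb : S ≤ b • Sig := hVrV b ▸ hVTV ▸ hVsa.conjugate_le_conjugate hTb
  constructor
  · simpa [smul_smul, hb.ne'] using smul_le_smul_of_nonneg_left hSb (inv_nonneg.2 hb.le)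
  · simpa [smul_smul, ha.ne'] using smul_le_smul_of_nonneg_left haS (inv_nonneg.2 ha.le)

lemma PosDef.isCompact_setOf_le_logDetSubTrace_mul_inv {S : Matrix n n ℝ} (hS : S.PosDef)
    (c : ℝ) : IsCompact {Sig | Sig.PosDef ∧ c ≤ logDetSubTrace (S * Sig⁻¹)} := by
  obtain ⟨L, U, hPD, hsub⟩ := hS.exists_Icc_superset_setOf_le_logDetSubTrace_mul_inv c
  have hcont : ContinuousOn (fun X => logDetSubTrace (S * X⁻¹)) (Set.Icc L U) := fun X hX =>
    (continuousAt_logDetSubTrace_mul_inv hS.det_pos.ne' (hPD hX).det_pos.ne').continuousWithinAt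
  have hset : {Sig | Sig.PosDef ∧ c ≤ logDetSubTrace (S * Sig⁻¹)} =
      Set.Icc L U ∩ (fun X => logDetSubTrace (S * X⁻¹)) ⁻¹' Set.Ici c :=
    Set.ext fun X => ⟨fun hX => ⟨hsub hX, hX.2⟩, fun hX => ⟨hPD hX.1, hX.2⟩⟩
  rw [hset]
  exact (isCompact_Icc L U).of_isClosed_subset
    (hcont.preimage_isClosed_of_isClosed (isClosed_Icc L U) isClosed_Ici) Set.inter_subset_left

end Matrix

theorem mle_exists_general {p : ℕ} (S : Matrix (Fin p) (Fin p) ℝ) (hS : S.PosDef)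
    (M : Set (Matrix (Fin p) (Fin p) ℝ)) (hMne : M.Nonempty)
    (hMclosed : ∃ C : Set (Matrix (Fin p) (Fin p) ℝ),
      IsClosed C ∧ M = C ∩ {Sig | Sig.PosDef}) :
    ∃ Sig0 ∈ M, ∀ Sig ∈ M,
      Real.log (S * Sig⁻¹).det - (S * Sig⁻¹).trace + p ≤
        Real.log (S * Sig0⁻¹).det - (S * Sig0⁻¹).trace + p := by
  obtain ⟨C, hC, rfl⟩ := hMclosed
  obtain ⟨Sig₁, hSig₁⟩ := hMne
  set ℓ := fun Sig : Matrix (Fin p) (Fin p) ℝ => logDetSubTrace (S * Sig⁻¹)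
  have hsuperlevel : {Sig | Sig ∈ C ∩ {Sig | Sig.PosDef} ∧ ℓ Sig₁ ≤ ℓ Sig} =
      C ∩ {Sig | Sig.PosDef ∧ ℓ Sig₁ ≤ ℓ Sig} := by
    ext
    simp only [Set.mem_ofPred_eq, Set.mem_inter_iff, and_assoc]
  obtain ⟨Sig₀, hSig₀, hmax⟩ := exists_isMaxOn_of_isCompact_superlevel hSig₁
    (hsuperlevel ▸ (hS.isCompact_setOf_le_logDetSubTrace_mul_inv _).inter_left hC)
    fun X hX => (continuousAt_logDetSubTrace_mul_inv hS.det_pos.ne'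
      hX.1.2.det_pos.ne').continuousWithinAt
  exact ⟨Sig₀, hSig₀, fun Sig hSig => add_le_add_left (hmax hSig) _⟩

theorem mle_exists {p : ℕ} (S : Matrix (Fin p) (Fin p) ℝ) (hS : S.PosDef)
    (M : Set (Matrix (Fin p) (Fin p) ℝ)) (hMne : M.Nonempty)
    (hMsub : ∀ Sig ∈ M, Sig.PosDef)
    (hMclosed : ∃ C : Set (Matrix (Fin p) (Fin p) ℝ),
      IsClosed C ∧ M = C ∩ {Sig | Sig.PosDef}) :
    ∃ Sig0 ∈ M, ∀ Sig ∈ M,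
      Real.log (S * Sig⁻¹).det - (S * Sig⁻¹).trace + p ≤
        Real.log (S * Sig0⁻¹).det - (S * Sig0⁻¹).trace + p :=
  mle_exists_general S hS M hMne hMclosed
end
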